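/- Let μ be defined on binary strings by the recursion μ(empty) = μ₀ > 0, μ(ξ·0) = (μ(ξ)+1)²−1, μ(ξ·1) = μ(ξ)/2. Among all binary strings of length m with exactly m−r ones (r ≥ 1 zeros), the string ξ* = (0^r, 1^{m-r}) maximizes μ. -/

import Mathlib

/-! A `1`-step only halves, and halving before a run of `0`-steps costs at least a factor `2`
at the end: with `g μ = (μ + 1)² − 1 = μ² + 2μ` one has `g (μ/2) = μ²/4 + μ ≤ g μ / 2`, and `g`
is monotone on `[-1, ∞)`, which every step maps into itself. Hence moving each `1` of a path to
the end never decreases the final variance, and a path with `r` zeros and `k` ones ends with at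
most `g^[r] μ₀ / 2^k`, the value of the path `0^r 1^k`. -/

/-- The variance propagated along a binary path `ξ` (read left to right)
starting from the initial variance `μ₀`: a `0`-step maps `μ ↦ (μ+1)² − 1`,
a `1`-step maps `μ ↦ μ/2`. -/
noncomputable def pathVar (μ₀ : ℝ) (ξ : List Bool) : ℝ :=
  ξ.foldl (fun μ b => if b then μ / 2 else (μ + 1) ^ 2 - 1) μ₀

open Set

theorem MonotoneOn.iterate {α : Type*} [Preorder α] {f : α → α} {s : Set α}
    (hf : MonotoneOn f s) (hs : MapsTo f s s) (n : ℕ) : MonotoneOn f^[n] s := by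
  induction n with
  | zero => exact monotone_id.monotoneOn s
  | succ n ih =>
    rw [Function.iterate_succ]
    exact ih.comp hf hs

namespace PathVar

def zeroStep (μ : ℝ) : ℝ := (μ + 1) ^ 2 - 1

lemma neg_one_le_zeroStep (μ : ℝ) : -1 ≤ zeroStep μ := by
  unfold zeroStep
  nlinarith [sq_nonneg (μ + 1)]

lemma zeroStep_monotoneOn : MonotoneOn zeroStep (Ici (-1)) := by
  intro μ hμ ν _ hμν
  simp only [zeroStep, mem_Ici] at *
  nlinarith

lemma mapsTo_zeroStep : MapsTo zeroStep (Ici (-1)) (Ici (-1)) :=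
  fun μ _ => neg_one_le_zeroStep μ

lemma zeroStep_half_le (μ : ℝ) : zeroStep (μ / 2) ≤ zeroStep μ / 2 := by
  unfold zeroStep
  nlinarith [sq_nonneg μ]

lemma iterate_zeroStep_half_le (r : ℕ) (μ : ℝ) :
    zeroStep^[r] (μ / 2) ≤ zeroStep^[r] μ / 2 := by
  induction r generalizing μ with
  | zero => rfl
  | succ r ih =>
    simp only [Function.iterate_succ_apply]
    have hhalf : zeroStep μ / 2 ∈ Ici (-1) := by
      simp only [mem_Ici]
      linarith [neg_one_le_zeroStep μ]
    calc zeroStep^[r] (zeroStep (μ / 2))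
        ≤ zeroStep^[r] (zeroStep μ / 2) :=
          zeroStep_monotoneOn.iterate mapsTo_zeroStep r (neg_one_le_zeroStep _) hhalf
            (zeroStep_half_le μ)
      _ ≤ zeroStep^[r] (zeroStep μ) / 2 := ih _

lemma pathVar_nil (μ : ℝ) : pathVar μ [] = μ := rfl

lemma pathVar_cons_false (μ : ℝ) (ξ : List Bool) :
    pathVar μ (false :: ξ) = pathVar (zeroStep μ) ξ := rfl

lemma pathVar_cons_true (μ : ℝ) (ξ : List Bool) :
    pathVar μ (true :: ξ) = pathVar (μ / 2) ξ := rfl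

lemma pathVar_replicate_true (μ : ℝ) (k : ℕ) :
    pathVar μ (List.replicate k true) = μ / 2 ^ k := by
  induction k generalizing μ with
  | zero => simp [pathVar_nil]
  | succ k ih => rw [List.replicate_succ, pathVar_cons_true, ih, pow_succ', div_div]

lemma pathVar_replicate_false_append (μ : ℝ) (r : ℕ) (ξ : List Bool) :
    pathVar μ (List.replicate r false ++ ξ) = pathVar (zeroStep^[r] μ) ξ := by
  induction r generalizing μ with
  | zero => rfl
  | succ r ih =>
    rw [List.replicate_succ, List.cons_append, pathVar_cons_false, ih,
      Function.iterate_succ_apply]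

lemma pathVar_le_iterate_zeroStep_div (ξ : List Bool) {μ : ℝ} (hμ : -1 ≤ μ) :
    pathVar μ ξ ≤ zeroStep^[ξ.count false] μ / 2 ^ ξ.count true := by
  induction ξ generalizing μ with
  | nil => simp [pathVar_nil]
  | cons b ξ ih =>
    cases b with
    | false =>
      rw [pathVar_cons_false, List.count_cons_self, List.count_cons_of_ne (by decide),
        Function.iterate_succ_apply]
      exact ih (neg_one_le_zeroStep μ)
    | true =>
      rw [pathVar_cons_true, List.count_cons_self, List.count_cons_of_ne (by decide),
        pow_succ', ← div_div]
      calc pathVar (μ / 2) ξ ≤ zeroStep^[ξ.count false] (μ / 2) / 2 ^ ξ.count true :=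
            ih (by linarith)
        _ ≤ zeroStep^[ξ.count false] μ / 2 / 2 ^ ξ.count true := by
            gcongr
            exact iterate_zeroStep_half_le _ μ

end PathVar

open PathVar in
theorem weakest_path_maximal_general (μ₀ : ℝ) (hμ₀ : 0 < μ₀)
    (m r : ℕ)
    (ξ : List Bool) (hlen : ξ.length = m) (hcount : ξ.count false = r) :
    pathVar μ₀ ξ ≤
      pathVar μ₀ (List.replicate r false ++ List.replicate (m - r) true) := by
  have hones : ξ.count true = m - r := by
    have := List.count_false_add_count_true ξ
    omega
  rw [pathVar_replicate_false_append, pathVar_replicate_true, ← hones, ← hcount]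
  exact pathVar_le_iterate_zeroStep_div ξ (by linarith)

/-- Among all binary strings of length `m` with exactly `r ≥ 1` zeros (i.e.
`m − r` ones), the string `ξ* = (0^r, 1^{m-r})` maximizes the propagated
variance, for any initial variance `μ₀ > 0`. -/
theorem weakest_path_maximal (μ₀ : ℝ) (hμ₀ : 0 < μ₀)
    (m r : ℕ) (hr : 1 ≤ r) (hrm : r ≤ m)
    (ξ : List Bool) (hlen : ξ.length = m) (hcount : ξ.count false = r) :
    pathVar μ₀ ξ ≤
      pathVar μ₀ (List.replicate r false ++ List.replicate (m - r) true) :=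
  weakest_path_maximal_general μ₀ hμ₀ m r ξ hlen hcount
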